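/- arXiv:math/0010250 — 4 statements merged into one kernel-verified Lean document; each statement's English description precedes it below -/
import Mathlib

section
/- The map γ_i ↦ γ_{i'} (where i' = N+1-i) extends to an algebra anti-automorphism τ of the FRT–Clifford algebra Cl_N(q,c), and τ has order two (τ² = id). -/
noncomputable section

namespace FRT

/-- The "dual" index `i' = N+1-i` (0-indexed: `N-1-i`). -/
def dual {N : ℕ} (i : Fin N) : Fin N := ⟨N - 1 - i.val, by have := i.2; omega⟩

/-- Generators of the free algebra. -/
def gen {N : ℕ} (i : Fin N) : FreeAlgebra ℂ (Fin N) := FreeAlgebra.ι ℂ i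

/-- The sum `∑_{k<i} q^{2k-2i+2} γ_k γ_{k'}` appearing in the defining relations. -/
def pairSum (N : ℕ) (q : ℂ) (i : Fin N) : FreeAlgebra ℂ (Fin N) :=
  ∑ k ∈ Finset.Iio i, (q ^ (2 * (k.val : ℤ) - 2 * (i.val : ℤ) + 2)) • (gen k * gen (dual k))

/-- The defining relations of the FRT–Clifford algebra `Cl_N(q,c)`. -/
inductive Rel (N : ℕ) (q c : ℂ) : FreeAlgebra ℂ (Fin N) → FreeAlgebra ℂ (Fin N) → Prop
  | sq (i : Fin N) (h : 2 * i.val + 1 ≠ N) : Rel N q c (gen i * gen i) 0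
  | swap (i j : Fin N) (hlt : i < j) (h : i.val + j.val + 1 ≠ N) :
      Rel N q c (gen j * gen i) ((-(q ^ 2)) • (gen i * gen j))
  | pair (i : Fin N) (h : 2 * i.val + 1 < N) :
      Rel N q c (gen (dual i) * gen i)
        (-(gen i * gen (dual i)) + (q ^ 2 - q⁻¹ ^ 2) • pairSum N q i +
          algebraMap ℂ _ (c ^ 2 * q ^ ((N : ℤ) - 2 * (i.val : ℤ) - 1) * (q + q⁻¹)))
  | middle (i : Fin N) (h : 2 * i.val + 1 = N) :
      Rel N q c (gen i * gen i) ((q - q⁻¹) • pairSum N q i + algebraMap ℂ _ (c ^ 2))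

/-- The FRT–Clifford algebra `Cl_N(q,c)`. -/
abbrev Cl (N : ℕ) (q c : ℂ) := RingQuot (Rel N q c)

/-- The generators `γ_i` of `Cl_N(q,c)`. -/
def γ (N : ℕ) (q c : ℂ) (i : Fin N) : Cl N q c :=
  RingQuot.mkAlgHom ℂ (Rel N q c) (gen i)

/-- Ordered product `γ_1 γ_2 ⋯ γ_m` of the first `m` generators. -/
def prodFirst (N : ℕ) (q c : ℂ) (m : ℕ) : Cl N q c :=
  (((List.finRange N).take m).map (γ N q c)).prod

/-- Ordered product `γ_{m+1} γ_{m+2} ⋯ γ_N` (0-indexed: indices `m,…,N-1`). -/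
def prodFrom (N : ℕ) (q c : ℂ) (m : ℕ) : Cl N q c :=
  (((List.finRange N).drop m).map (γ N q c)).prod

/-- The ordered monomial `γ_1^{i_1} ⋯ γ_N^{i_N}` for `i ∈ {0,1}^N`. -/
def monoB (N : ℕ) (q c : ℂ) (f : Fin N → Bool) : Cl N q c :=
  ((List.finRange N).map (fun i => if f i then γ N q c i else 1)).prod

/-- The ordered monomial `γ_1^{i_1} ⋯ γ_n^{i_n}` for `i ∈ {0,1}^n`, `n ≤ N`. -/
def monoLow (N : ℕ) (q c : ℂ) {n : ℕ} (h : n ≤ N) (f : Fin n → Bool) : Cl N q c :=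
  ((List.finRange n).map (fun j => if f j then γ N q c (Fin.castLE h j) else 1)).prod

/-- `z` is homogeneous of `∂_i`-degree `0`: it is fixed by every algebra endomorphism
rescaling `γ_i` by `t` and `γ_{i'}` by `t⁻¹`. -/
def DegZeroAt (N : ℕ) (q c : ℂ) (i : ℕ) (z : Cl N q c) : Prop :=
  ∀ t : ℂ, t ≠ 0 → ∀ f : Cl N q c →ₐ[ℂ] Cl N q c,
    (∀ j : Fin N, f (γ N q c j) =
      (if j.val = i then t else if j.val + i + 1 = N then t⁻¹ else 1) • γ N q c j) →
    f z = z

open MulOpposite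

lemma dual_dual {N : ℕ} (i : Fin N) : dual (dual i) = i := by
  have := i.2; ext; simp [dual]; omega

def phi (N : ℕ) (q c : ℂ) : FreeAlgebra ℂ (Fin N) →ₐ[ℂ] (Cl N q c)ᵐᵒᵖ :=
  FreeAlgebra.lift ℂ (fun i => op (γ N q c (dual i)))

lemma phi_gen (N : ℕ) (q c : ℂ) (i : Fin N) :
    phi N q c (gen i) = op (γ N q c (dual i)) := by
  simp [phi, gen]

lemma phi_pairSum (N : ℕ) (q c : ℂ) (i : Fin N) :
    phi N q c (pairSum N q i) = op (RingQuot.mkAlgHom ℂ (Rel N q c) (pairSum N q i)) := by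
  have hop : ∀ (g : Fin N → Cl N q c) (s : Finset (Fin N)),
      op (∑ k ∈ s, g k) = ∑ k ∈ s, op (g k) := by
    intro g s
    simpa using map_sum (MulOpposite.opAddEquiv : Cl N q c ≃+ (Cl N q c)ᵐᵒᵖ) g s
  rw [pairSum, map_sum, map_sum, hop]
  refine Finset.sum_congr rfl fun k _ => ?_
  rw [map_smul, map_mul, phi_gen, phi_gen, dual_dual, ← op_mul, ← op_smul, map_smul, map_mul]
  rfl

lemma phi_rel (N : ℕ) (q c : ℂ) : ∀ ⦃a b⦄, Rel N q c a b → phi N q c a = phi N q c b := by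
  intro a b r
  cases r with
  | sq i h =>
      have h' : 2 * (dual i).val + 1 ≠ N := by have := i.2; simp [dual]; omega
      have key : γ N q c (dual i) * γ N q c (dual i) = 0 := by
        have := RingQuot.mkAlgHom_rel ℂ (Rel.sq (q := q) (c := c) (dual i) h')
        rw [map_mul, map_zero] at this; exact this
      rw [map_mul, phi_gen, map_zero, ← op_mul, key]; rfl
  | swap i j hlt h =>
      have hlt' : dual j < dual i := by
        have := i.2; have := j.2; have hl := Fin.lt_def.mp hlt
        simp only [dual, Fin.lt_def]; omega
      have h' : (dual j).val + (dual i).val + 1 ≠ N := by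
        have := i.2; have := j.2; have hl := Fin.lt_def.mp hlt; simp only [dual]; omega
      have key : γ N q c (dual i) * γ N q c (dual j) =
          (-(q ^ 2)) • (γ N q c (dual j) * γ N q c (dual i)) := by
        have := RingQuot.mkAlgHom_rel ℂ (Rel.swap (q := q) (c := c) (dual j) (dual i) hlt' h')
        rw [map_mul, map_smul, map_mul] at this; exact this
      rw [map_mul, map_smul, map_mul, phi_gen, phi_gen, ← op_mul, ← op_mul, ← op_smul]
      exact congrArg op key
  | pair i h =>
      have key : γ N q c (dual i) * γ N q c i =
          -(γ N q c i * γ N q c (dual i)) +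
            (q ^ 2 - q⁻¹ ^ 2) • (RingQuot.mkAlgHom ℂ (Rel N q c)) (pairSum N q i) +
            algebraMap ℂ _ (c ^ 2 * q ^ ((N : ℤ) - 2 * (i.val : ℤ) - 1) * (q + q⁻¹)) := by
        have := RingQuot.mkAlgHom_rel ℂ (Rel.pair (q := q) (c := c) i h)
        rw [map_mul, map_add, map_add, map_neg, map_mul, map_smul, AlgHom.commutes] at this
        exact this
      set s : ℂ := c ^ 2 * q ^ ((N : ℤ) - 2 * (i.val : ℤ) - 1) * (q + q⁻¹) with hs
      rw [map_mul, map_add, map_add, map_neg, map_mul, map_smul, AlgHom.commutes,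
        phi_pairSum, phi_gen, phi_gen, dual_dual, ← op_mul, ← op_mul, ← op_smul,
        ← op_neg, MulOpposite.algebraMap_apply, ← op_add, ← op_add]
      exact congrArg op key
  | middle i h =>
      have hd : dual i = i := by have := i.2; ext; simp only [dual]; omega
      have key : γ N q c i * γ N q c i =
          (q - q⁻¹) • (RingQuot.mkAlgHom ℂ (Rel N q c)) (pairSum N q i) +
            algebraMap ℂ _ (c ^ 2) := by
        have := RingQuot.mkAlgHom_rel ℂ (Rel.middle (q := q) (c := c) i h)
        rw [map_mul, map_add, map_smul, AlgHom.commutes] at this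
        exact this
      rw [map_mul, map_add, map_smul, AlgHom.commutes, phi_pairSum, phi_gen, hd,
        ← op_mul, ← op_smul, MulOpposite.algebraMap_apply, ← op_add]
      exact congrArg op key

variable (N : ℕ) (q c : ℂ)

def tauA : Cl N q c →ₐ[ℂ] (Cl N q c)ᵐᵒᵖ :=
  RingQuot.liftAlgHom ℂ ⟨phi N q c, phi_rel N q c⟩

lemma tauA_γ (i : Fin N) : tauA N q c (γ N q c i) = op (γ N q c (dual i)) := by
  rw [γ, tauA, RingQuot.liftAlgHom_mkAlgHom_apply, phi_gen]

def tauF (x : Cl N q c) : Cl N q c := unop (tauA N q c x)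

lemma tauF_one : tauF N q c 1 = 1 := by simp [tauF]

lemma tauF_mul (x y : Cl N q c) : tauF N q c (x * y) = tauF N q c y * tauF N q c x := by
  simp [tauF, map_mul]

lemma tauF_γ (i : Fin N) : tauF N q c (γ N q c i) = γ N q c (dual i) := by
  rw [tauF, tauA_γ, unop_op]

lemma tauF_algebraMap (r : ℂ) :
    tauF N q c (algebraMap ℂ (Cl N q c) r) = algebraMap ℂ (Cl N q c) r := by
  simp [tauF, AlgHom.commutes, MulOpposite.algebraMap_apply]

def tauL : Cl N q c →ₗ[ℂ] Cl N q c :=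
  ((opLinearEquiv ℂ).symm : (Cl N q c)ᵐᵒᵖ ≃ₗ[ℂ] Cl N q c).toLinearMap.comp
    (tauA N q c).toLinearMap

lemma tauL_apply (x : Cl N q c) : tauL N q c x = tauF N q c x := rfl

def tauSq : Cl N q c →ₐ[ℂ] Cl N q c where
  toFun x := tauF N q c (tauF N q c x)
  map_one' := by
    show tauF N q c (tauF N q c 1) = 1
    rw [tauF_one, tauF_one]
  map_mul' x y := by
    show tauF N q c (tauF N q c (x * y)) =
      tauF N q c (tauF N q c x) * tauF N q c (tauF N q c y)
    rw [tauF_mul, tauF_mul]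
  map_zero' := by
    show tauF N q c (tauF N q c 0) = 0
    simp [tauF]
  map_add' x y := by
    show tauF N q c (tauF N q c (x + y)) =
      tauF N q c (tauF N q c x) + tauF N q c (tauF N q c y)
    simp [tauF, map_add]
  commutes' r := by
    show tauF N q c (tauF N q c (algebraMap ℂ (Cl N q c) r)) = algebraMap ℂ (Cl N q c) r
    rw [tauF_algebraMap, tauF_algebraMap]

lemma tauF_invol (x : Cl N q c) : tauF N q c (tauF N q c x) = x := by
  have he : (tauSq N q c).comp (RingQuot.mkAlgHom ℂ (Rel N q c)) =
      RingQuot.mkAlgHom ℂ (Rel N q c) := by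
    apply FreeAlgebra.hom_ext
    funext i
    show tauSq N q c (γ N q c i) = γ N q c i
    show tauF N q c (tauF N q c (γ N q c i)) = γ N q c i
    rw [tauF_γ, tauF_γ, dual_dual]
  obtain ⟨y, rfl⟩ := RingQuot.mkAlgHom_surjective ℂ (Rel N q c) x
  exact DFunLike.congr_fun he y

/-- `γ_i ↦ γ_{i'}` extends to an algebra anti-automorphism `τ` of `Cl_N(q,c)`
of order two. -/
theorem exists_antiAut_tau (N : ℕ) (hN : 3 ≤ N) (q c : ℂ)
    (hq : q ≠ 0) (hqr : ∀ m : ℕ, 0 < m → q ^ m ≠ 1) (hc : c ≠ 0) :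
    ∃ τ : Cl N q c ≃ₗ[ℂ] Cl N q c,
      τ 1 = 1 ∧
      (∀ x y : Cl N q c, τ (x * y) = τ y * τ x) ∧
      (∀ i : Fin N, τ (γ N q c i) = γ N q c (dual i)) ∧
      (∀ x : Cl N q c, τ (τ x) = x) := by
  have hinv : (tauL N q c).comp (tauL N q c) = LinearMap.id :=
    LinearMap.ext fun x => by
      simp only [LinearMap.comp_apply, tauL_apply, LinearMap.id_apply, tauF_invol]
  refine ⟨LinearEquiv.ofLinear (tauL N q c) (tauL N q c) hinv hinv, ?_, ?_, ?_, ?_⟩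
  · exact tauF_one N q c
  · exact tauF_mul N q c
  · exact tauF_γ N q c
  · exact tauF_invol N q c


end FRT
end
end

section
/- For i ≤ n (with N = 2n or 2n+1) one has the identity γ_1 γ_2 ⋯ γ_{i'} γ_i = c² q^{N-2i+1}(q+q^{-1}) γ_1 γ_2 ⋯ γ_{i'-1} in Cl_N(q,c), where the left-hand product runs over γ_1 through γ_{i'} in increasing index order followed by γ_i. -/
noncomputable section

namespace FRT

lemma prodFirst_succ (N : ℕ) (q c : ℂ) (m : ℕ) (hm : m < N) :
    prodFirst N q c (m + 1) = prodFirst N q c m * γ N q c ⟨m, hm⟩ := by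
  unfold prodFirst
  rw [List.map_take, List.map_take,
    List.prod_take_succ _ m (by simpa using hm)]
  simp

lemma gamma_sq (N : ℕ) (q c : ℂ) (k : Fin N) (h : 2 * k.val + 1 ≠ N) :
    γ N q c k * γ N q c k = 0 := by
  have := RingQuot.mkAlgHom_rel ℂ (Rel.sq (q := q) (c := c) k h)
  simpa [γ, map_mul] using this

lemma gamma_swap (N : ℕ) (q c : ℂ) (k j : Fin N) (hlt : k < j)
    (h : k.val + j.val + 1 ≠ N) :
    γ N q c j * γ N q c k = (-(q ^ 2)) • (γ N q c k * γ N q c j) := by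
  have := RingQuot.mkAlgHom_rel ℂ (Rel.swap (q := q) (c := c) k j hlt h)
  rw [map_mul, map_smul, map_mul] at this
  exact this

lemma prodFirst_mul_gamma_eq_zero (N : ℕ) (q c : ℂ) :
    ∀ m : ℕ, ∀ k : Fin N, k.val < m → k.val + m < N →
      prodFirst N q c m * γ N q c k = 0 := by
  intro m
  induction m with
  | zero => intro k hk; omega
  | succ m ih =>
    intro k hk hkm
    have hmN : m < N := by omega
    rw [prodFirst_succ N q c m hmN, mul_assoc]
    rcases Nat.lt_or_ge k.val m with hlt | hge
    · rw [gamma_swap N q c k ⟨m, hmN⟩ hlt (show k.val + m + 1 ≠ N by omega)]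
      rw [mul_smul_comm, ← mul_assoc, ih k hlt (by omega), zero_mul, smul_zero]
    · have hk' : k = ⟨m, hmN⟩ := Fin.ext (show k.val = m by omega)
      rw [hk', gamma_sq N q c ⟨m, hmN⟩ (show 2 * m + 1 ≠ N by omega), mul_zero]

lemma gamma_pair (N : ℕ) (q c : ℂ) (i : Fin N) (h : 2 * i.val + 1 < N) :
    γ N q c (dual i) * γ N q c i =
      -(γ N q c i * γ N q c (dual i)) +
        (q ^ 2 - q⁻¹ ^ 2) • RingQuot.mkAlgHom ℂ (Rel N q c) (pairSum N q i) +
        algebraMap ℂ _ (c ^ 2 * q ^ ((N : ℤ) - 2 * (i.val : ℤ) - 1) * (q + q⁻¹)) := by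
  have := RingQuot.mkAlgHom_rel ℂ (Rel.pair (q := q) (c := c) i h)
  simpa [γ, map_mul, map_add, AlgHom.commutes] using this

/-- for `i < i'`, `γ_1⋯γ_{i'}γ_i = c²q^{N-2i+1}(q+q⁻¹) γ_1⋯γ_{i'-1}`. -/
theorem prodFirst_mul_gamma (N : ℕ) (hN : 3 ≤ N) (q c : ℂ)
    (hq : q ≠ 0) (hqr : ∀ m : ℕ, 0 < m → q ^ m ≠ 1) (hc : c ≠ 0)
    (i : Fin N) (h : 2 * i.val + 1 < N) :
    prodFirst N q c (N - i.val) * γ N q c i =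
      (c ^ 2 * q ^ ((N : ℤ) - 2 * (i.val : ℤ) - 1) * (q + q⁻¹)) •
        prodFirst N q c (N - i.val - 1) := by
  have hiN : i.val < N := i.2
  set d : ℕ := N - 1 - i.val with hd
  have hdN : d < N := by omega
  have h1 : N - i.val = d + 1 := by omega
  have h2 : N - i.val - 1 = d := by omega
  have hdualγ : γ N q c ⟨d, hdN⟩ = γ N q c (dual i) := by
    congr 1
  rw [h2, h1, prodFirst_succ N q c d hdN, hdualγ, mul_assoc,
    gamma_pair N q c i h]
  rw [mul_add, mul_add]
  have hzero : prodFirst N q c d * γ N q c i = 0 :=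
    prodFirst_mul_gamma_eq_zero N q c d i (by omega) (by omega)
  have hA : prodFirst N q c d * -(γ N q c i * γ N q c (dual i)) = 0 := by
    have hmn := mul_neg (prodFirst N q c d) (γ N q c i * γ N q c (dual i))
    rw [hmn, ← mul_assoc, hzero, zero_mul, neg_zero]
  have hB : prodFirst N q c d *
      ((q ^ 2 - q⁻¹ ^ 2) • RingQuot.mkAlgHom ℂ (Rel N q c) (pairSum N q i)) = 0 := by
    rw [mul_smul_comm]
    have : prodFirst N q c d * RingQuot.mkAlgHom ℂ (Rel N q c) (pairSum N q i) = 0 := by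
      unfold pairSum
      rw [map_sum, Finset.mul_sum]
      refine Finset.sum_eq_zero fun k hk => ?_
      have hki : k < i := Finset.mem_Iio.mp hk
      have hki' : k.val < i.val := hki
      have e1 : (RingQuot.mkAlgHom ℂ (Rel N q c)) (gen k) = γ N q c k := rfl
      have e2 : (RingQuot.mkAlgHom ℂ (Rel N q c)) (gen (dual k)) = γ N q c (dual k) := rfl
      rw [map_smul, map_mul, e1, e2, mul_smul_comm, ← mul_assoc,
        prodFirst_mul_gamma_eq_zero N q c d k (by omega) (by omega), zero_mul, smul_zero]
    rw [this, smul_zero]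
  have hC : prodFirst N q c d *
      algebraMap ℂ (Cl N q c) (c ^ 2 * q ^ ((N : ℤ) - 2 * (i.val : ℤ) - 1) * (q + q⁻¹)) =
      (c ^ 2 * q ^ ((N : ℤ) - 2 * (i.val : ℤ) - 1) * (q + q⁻¹)) • prodFirst N q c d := by
    rw [← Algebra.commutes, ← Algebra.smul_def]
  rw [hA, hB, hC, zero_add, zero_add]

end FRT
end
end

section
/- Let N = 2n+ε and φ_N^ν = (νc + γ_{n+1})γ_{n+2}⋯γ_N for N = 2n+1 (ν = ±1) and φ_N^1 = γ_{n+1}γ_{n+2}⋯γ_N for N = 2n. Then γ_k φ_N^ν = 0 for all k > k' (i.e., k ≥ n+1+ε), and for N = 2n+1, γ_{n+1} φ_N^ν = νc φ_N^ν. -/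
noncomputable section

namespace FRT

/-! In the upper half of the indices the generators square to zero and `q`-anticommute, so `γ_k`
annihilates `γ_m ⋯ γ_N` whenever `k ≥ m ≥ N/2`: move `γ_k` leftwards past the smaller factors
until it meets itself. For odd `N` the middle relation gives `γ_{n+1}² = c²` up to terms
`γ_k γ_{k'}` with `k' > n+1`, which annihilate `γ_{n+2} ⋯ γ_N` as well; hence `γ_{n+1}` acts on
`(νc + γ_{n+1}) γ_{n+2} ⋯ γ_N` as `νc`, because `ν² = 1`. -/

theorem _root_.List.mem_drop_finRange {N m : ℕ} {k : Fin N} :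
    k ∈ (List.finRange N).drop m ↔ m ≤ k.val := by
  simp only [List.mem_drop_iff_getElem, List.length_finRange, List.getElem_finRange]
  constructor
  · rintro ⟨j, -, rfl⟩
    simp
  · intro hk
    exact ⟨k.val - m, by omega, Fin.ext (by simp; omega)⟩

section

variable {N : ℕ} (q c : ℂ)

theorem γ_mul_self (i : Fin N) (h : 2 * i.val + 1 ≠ N) : γ N q c i * γ N q c i = 0 := by
  rw [γ, ← map_mul, RingQuot.mkAlgHom_rel ℂ (Rel.sq i h), map_zero]

theorem γ_mul_γ_of_lt {i j : Fin N} (hlt : i < j) (h : i.val + j.val + 1 ≠ N) :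
    γ N q c j * γ N q c i = (-(q ^ 2)) • (γ N q c i * γ N q c j) := by
  rw [γ, γ, ← map_mul, RingQuot.mkAlgHom_rel ℂ (Rel.swap i j hlt h), map_smul, map_mul]

theorem γ_mul_self_of_middle (i : Fin N) (h : 2 * i.val + 1 = N) :
    γ N q c i * γ N q c i =
      (q - q⁻¹) • ∑ k ∈ Finset.Iio i, (q ^ (2 * (k.val : ℤ) - 2 * (i.val : ℤ) + 2)) •
          (γ N q c k * γ N q c (dual k)) + algebraMap ℂ _ (c ^ 2) := by
  rw [γ, ← map_mul, RingQuot.mkAlgHom_rel ℂ (Rel.middle i h), map_add, map_smul,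
    AlgHom.commutes, pairSum, map_sum]
  simp only [map_smul, map_mul, γ]

theorem γ_mul_prod_eq_zero_of_mem {l : List (Fin N)} (hl : l.Pairwise (· < ·))
    (hupper : ∀ j ∈ l, N ≤ 2 * j.val) {k : Fin N} (hk : k ∈ l) :
    γ N q c k * (l.map (γ N q c)).prod = 0 := by
  induction l with
  | nil => cases hk
  | cons a t ih =>
    have ha := hupper a List.mem_cons_self
    rw [List.map_cons, List.prod_cons, ← mul_assoc]
    rcases List.mem_cons.mp hk with rfl | hkt
    · rw [γ_mul_self q c k (by omega), zero_mul]
    · have hak : a < k := List.rel_of_pairwise_cons hl hkt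
      have hkk := hupper k (List.mem_cons_of_mem a hkt)
      rw [γ_mul_γ_of_lt q c hak (by omega), smul_mul_assoc, mul_assoc,
        ih hl.of_cons (fun j hj => hupper j (List.mem_cons_of_mem a hj)) hkt, mul_zero, smul_zero]

theorem γ_mul_prodFrom_eq_zero {m : ℕ} (hm : N ≤ 2 * m) {k : Fin N} (hk : m ≤ k.val) :
    γ N q c k * prodFrom N q c m = 0 :=
  γ_mul_prod_eq_zero_of_mem q c ((List.pairwise_lt_finRange N).sublist (List.drop_sublist m _))
    (fun j hj => by have := List.mem_drop_finRange.mp hj; omega) (List.mem_drop_finRange.mpr hk)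

theorem γ_mul_self_mul_prodFrom_of_middle (i : Fin N) (h : 2 * i.val + 1 = N) :
    γ N q c i * γ N q c i * prodFrom N q c (i.val + 1) = c ^ 2 • prodFrom N q c (i.val + 1) := by
  have hpair : ∀ k ∈ Finset.Iio i,
      γ N q c k * γ N q c (dual k) * prodFrom N q c (i.val + 1) = 0 := by
    intro k hk
    have hki : k.val < i.val := Fin.lt_def.mp (Finset.mem_Iio.mp hk)
    rw [mul_assoc, γ_mul_prodFrom_eq_zero q c (by omega) (by simp only [dual]; omega), mul_zero]
  rw [γ_mul_self_of_middle q c i h, add_mul, smul_mul_assoc, Finset.sum_mul,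
    Finset.sum_eq_zero fun k hk => by rw [smul_mul_assoc, hpair k hk, smul_zero],
    smul_zero, zero_add, ← Algebra.smul_def]

end

/-- `γ_k φ_N^ν = 0` for all `k > k'`, and for odd `N`,
`γ_{n+1} φ_N^ν = νc φ_N^ν`. -/
theorem gamma_mul_phi (n : ℕ) (q c : ℂ) :
    (∀ k : Fin (2 * n), 2 * n < 2 * k.val + 1 →
      γ (2 * n) q c k * prodFrom (2 * n) q c n = 0) ∧
    (∀ ν : ℂ, ν = 1 ∨ ν = -1 →
      (∀ k : Fin (2 * n + 1), 2 * n + 1 < 2 * k.val + 1 →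
        γ (2 * n + 1) q c k *
          ((algebraMap ℂ (Cl (2 * n + 1) q c) (ν * c) + γ (2 * n + 1) q c ⟨n, by omega⟩) *
            prodFrom (2 * n + 1) q c (n + 1)) = 0) ∧
      γ (2 * n + 1) q c ⟨n, by omega⟩ *
          ((algebraMap ℂ (Cl (2 * n + 1) q c) (ν * c) + γ (2 * n + 1) q c ⟨n, by omega⟩) *
            prodFrom (2 * n + 1) q c (n + 1)) =
        (ν * c) •
          ((algebraMap ℂ (Cl (2 * n + 1) q c) (ν * c) + γ (2 * n + 1) q c ⟨n, by omega⟩) *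
            prodFrom (2 * n + 1) q c (n + 1))) := by
  refine ⟨fun k hk => γ_mul_prodFrom_eq_zero q c (by omega) (by omega), fun ν hν => ?_⟩
  set mid : Fin (2 * n + 1) := ⟨n, by omega⟩
  set φ := prodFrom (2 * n + 1) q c (n + 1)
  have hkill : ∀ k : Fin (2 * n + 1), n + 1 ≤ k.val → γ (2 * n + 1) q c k * φ = 0 :=
    fun k hk => γ_mul_prodFrom_eq_zero q c (by omega) hk
  simp only [add_mul, mul_add, ← Algebra.smul_def, mul_smul_comm]
  refine ⟨fun k hk => ?_, ?_⟩
  · have hmid_lt : mid < k := Fin.lt_def.mpr (by simp only [mid]; omega)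
    rw [hkill k (by omega), ← mul_assoc, γ_mul_γ_of_lt q c hmid_lt (by simp only [mid]; omega),
      smul_mul_assoc, mul_assoc, hkill k (by omega)]
    simp
  · have hνc : ν * c * (ν * c) = c ^ 2 := by rcases hν with rfl | rfl <;> ring
    rw [← mul_assoc, γ_mul_self_mul_prodFrom_of_middle q c mid rfl, smul_add, smul_smul, hνc]
    exact add_comm _ _

end FRT
end
end

section
/- Suppose μ_1,…,μ_N ∈ ℂ with μ_j = 0 for some j. Then the only element z ∈ Cl_N(q,c) satisfying z γ_i = μ_i γ_i z for all i = 1,…,N is z = 0. -/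
noncomputable section

namespace FRT

/-! ### Auxiliary definitions -/

def aaE (N : ℕ) (q c : ℂ) (k : Fin N) : Cl N q c := γ N q c k * γ N q c (dual k)

def bbE (N : ℕ) (q c : ℂ) (k : Fin N) : Cl N q c := γ N q c (dual k) * γ N q c k

def Sig (N : ℕ) (q c : ℂ) (i : Fin N) : Cl N q c :=
  ∑ k ∈ Finset.Iio i, (q ^ (2 * (k.val : ℤ) - 2 * (i.val : ℤ) + 2)) • aaE N q c k

def scE (N : ℕ) (q c : ℂ) (i : Fin N) : ℂ :=
  c ^ 2 * q ^ ((N : ℤ) - 2 * (i.val : ℤ) - 1) * (q + q⁻¹)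

def BBE (N : ℕ) (q c : ℂ) : ℕ → Cl N q c
  | 0 => 1
  | r + 1 => BBE N q c r * (if h : r < N then bbE N q c ⟨r, h⟩ else 1)

lemma BBE_zero (N : ℕ) (q c : ℂ) : BBE N q c 0 = 1 := rfl

lemma BBE_succ (N : ℕ) (q c : ℂ) (r : ℕ) (h : r < N) :
    BBE N q c (r + 1) = BBE N q c r * bbE N q c ⟨r, h⟩ := by
  rw [BBE, dif_pos h]

/-! ### Relations in Cl -/

lemma mk_pairSum (N : ℕ) (q c : ℂ) (i : Fin N) :
    RingQuot.mkAlgHom ℂ (Rel N q c) (pairSum N q i) = Sig N q c i := by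
  unfold pairSum Sig aaE
  rw [map_sum]
  exact Finset.sum_congr rfl fun k _ => by rw [map_smul, map_mul]; rfl

lemma cl_sq (N : ℕ) (q c : ℂ) (i : Fin N) (h : 2 * i.val + 1 ≠ N) :
    γ N q c i * γ N q c i = 0 := by
  have h1 := RingQuot.mkAlgHom_rel ℂ (Rel.sq (N := N) (q := q) (c := c) i h)
  rw [map_mul, map_zero] at h1
  exact h1

lemma cl_swap (N : ℕ) (q c : ℂ) (i j : Fin N) (hlt : i < j) (h : i.val + j.val + 1 ≠ N) :
    γ N q c j * γ N q c i = (-(q ^ 2)) • (γ N q c i * γ N q c j) := by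
  have h1 := RingQuot.mkAlgHom_rel ℂ (Rel.swap (N := N) (q := q) (c := c) i j hlt h)
  rw [map_mul, map_smul, map_mul] at h1
  exact h1

lemma cl_swap' (N : ℕ) (q c : ℂ) (hq : q ≠ 0) (i j : Fin N) (hlt : i < j)
    (h : i.val + j.val + 1 ≠ N) :
    γ N q c i * γ N q c j = (-(q⁻¹ ^ 2)) • (γ N q c j * γ N q c i) := by
  rw [cl_swap N q c i j hlt h, smul_smul,
    show (-(q⁻¹ ^ 2)) * (-(q ^ 2)) = 1 by field_simp, one_smul]

lemma cl_pair (N : ℕ) (q c : ℂ) (i : Fin N) (h : 2 * i.val + 1 < N) :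
    γ N q c (dual i) * γ N q c i =
      -(γ N q c i * γ N q c (dual i)) + (q ^ 2 - q⁻¹ ^ 2) • Sig N q c i +
        algebraMap ℂ _ (scE N q c i) := by
  have h1 := RingQuot.mkAlgHom_rel ℂ (Rel.pair (N := N) (q := q) (c := c) i h)
  rw [map_mul, map_add, map_add, map_neg, map_mul, map_smul, mk_pairSum,
    AlgHom.commutes] at h1
  exact h1

lemma cl_mid (N : ℕ) (q c : ℂ) (i : Fin N) (h : 2 * i.val + 1 = N) :
    γ N q c i * γ N q c i = (q - q⁻¹) • Sig N q c i + algebraMap ℂ _ (c ^ 2) := by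
  have h1 := RingQuot.mkAlgHom_rel ℂ (Rel.middle (N := N) (q := q) (c := c) i h)
  rw [map_mul, map_add, map_smul, mk_pairSum, AlgHom.commutes] at h1
  exact h1

/-! ### Commutation lemmas -/

lemma gen_comm_bb (N : ℕ) (q c : ℂ) (hq : q ≠ 0) (k m : Fin N)
    (h1 : k.val < m.val) (h2 : m.val + k.val + 1 < N) :
    γ N q c m * bbE N q c k = bbE N q c k * γ N q c m := by
  have hk := k.2; have hm := m.2
  have hmd : m < dual k := by
    rw [Fin.lt_def]; show m.val < N - 1 - k.val; omega
  have e1 : γ N q c m * γ N q c (dual k) = (-(q⁻¹ ^ 2)) • (γ N q c (dual k) * γ N q c m) :=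
    cl_swap' N q c hq m (dual k) hmd (by show m.val + (N - 1 - k.val) + 1 ≠ N; omega)
  have e2 : γ N q c m * γ N q c k = (-(q ^ 2)) • (γ N q c k * γ N q c m) :=
    cl_swap N q c k m (by rw [Fin.lt_def]; exact h1) (by omega)
  unfold bbE
  rw [← mul_assoc, e1, smul_mul_assoc, mul_assoc, e2, mul_smul_comm, smul_smul,
    show (-(q⁻¹ ^ 2)) * (-(q ^ 2)) = 1 by field_simp, one_smul]
  exact (mul_assoc _ _ _).symm

lemma gen_comm_aa (N : ℕ) (q c : ℂ) (hq : q ≠ 0) (k m : Fin N)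
    (h1 : k.val < m.val) (h2 : m.val + k.val + 1 < N) :
    γ N q c m * aaE N q c k = aaE N q c k * γ N q c m := by
  have hk := k.2; have hm := m.2
  have hmd : m < dual k := by
    rw [Fin.lt_def]; show m.val < N - 1 - k.val; omega
  have e1 : γ N q c m * γ N q c (dual k) = (-(q⁻¹ ^ 2)) • (γ N q c (dual k) * γ N q c m) :=
    cl_swap' N q c hq m (dual k) hmd (by show m.val + (N - 1 - k.val) + 1 ≠ N; omega)
  have e2 : γ N q c m * γ N q c k = (-(q ^ 2)) • (γ N q c k * γ N q c m) :=
    cl_swap N q c k m (by rw [Fin.lt_def]; exact h1) (by omega)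
  unfold aaE
  rw [← mul_assoc, e2, smul_mul_assoc, mul_assoc, e1, mul_smul_comm, smul_smul,
    show (-(q ^ 2)) * (-(q⁻¹ ^ 2)) = 1 by field_simp, one_smul]
  exact (mul_assoc _ _ _).symm

lemma aa_mul_bb_comm (N : ℕ) (q c : ℂ) (hq : q ≠ 0) (k l : Fin N)
    (h1 : k.val < l.val) (h2 : l.val + k.val + 1 < N) :
    aaE N q c l * bbE N q c k = bbE N q c k * aaE N q c l := by
  have hl := l.2
  have c1 : γ N q c l * bbE N q c k = bbE N q c k * γ N q c l :=
    gen_comm_bb N q c hq k l h1 h2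
  have c2 : γ N q c (dual l) * bbE N q c k = bbE N q c k * γ N q c (dual l) :=
    gen_comm_bb N q c hq k (dual l) (by show k.val < N - 1 - l.val; omega)
      (by show (N - 1 - l.val) + k.val + 1 < N; omega)
  show γ N q c l * γ N q c (dual l) * bbE N q c k = _
  rw [mul_assoc, c2, ← mul_assoc, c1, mul_assoc]
  rfl

lemma bb_mul_aa_comm (N : ℕ) (q c : ℂ) (hq : q ≠ 0) (l m : Fin N)
    (h1 : l.val < m.val) (h2 : m.val + l.val + 1 < N) :
    bbE N q c m * aaE N q c l = aaE N q c l * bbE N q c m := by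
  have hm := m.2
  have c1 : γ N q c m * aaE N q c l = aaE N q c l * γ N q c m :=
    gen_comm_aa N q c hq l m h1 h2
  have c2 : γ N q c (dual m) * aaE N q c l = aaE N q c l * γ N q c (dual m) :=
    gen_comm_aa N q c hq l (dual m) (by show l.val < N - 1 - m.val; omega)
      (by show (N - 1 - m.val) + l.val + 1 < N; omega)
  show γ N q c (dual m) * γ N q c m * aaE N q c l = _
  rw [mul_assoc, c1, ← mul_assoc, c2, mul_assoc]
  rfl

lemma aa_bb_zero (N : ℕ) (q c : ℂ) (k : Fin N) (h : 2 * k.val + 1 < N) :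
    aaE N q c k * bbE N q c k = 0 := by
  have hk := k.2
  have hsq : γ N q c (dual k) * γ N q c (dual k) = 0 :=
    cl_sq N q c (dual k) (by show 2 * (N - 1 - k.val) + 1 ≠ N; omega)
  show γ N q c k * γ N q c (dual k) * (γ N q c (dual k) * γ N q c k) = 0
  rw [mul_assoc, ← mul_assoc (γ N q c (dual k)), hsq, zero_mul, mul_zero]

lemma bb_aa_zero (N : ℕ) (q c : ℂ) (k : Fin N) (h : 2 * k.val + 1 < N) :
    bbE N q c k * aaE N q c k = 0 := by
  have hsq : γ N q c k * γ N q c k = 0 := cl_sq N q c k (by omega)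
  show γ N q c (dual k) * γ N q c k * (γ N q c k * γ N q c (dual k)) = 0
  rw [mul_assoc, ← mul_assoc (γ N q c k), hsq, zero_mul, mul_zero]

/-! ### Lemmas about the ordered products BBE -/

lemma BB_mul_aa (N : ℕ) (q c : ℂ) (hq : q ≠ 0) (r : ℕ) (hr : 2 * r + 1 ≤ N)
    (l : Fin N) (hl : l.val < r) :
    BBE N q c r * aaE N q c l = 0 := by
  induction r with
  | zero => omega
  | succ m ih =>
    have hm : m < N := by omega
    rw [BBE_succ N q c m hm, mul_assoc]
    rcases Nat.lt_or_ge l.val m with h | h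
    · rw [bb_mul_aa_comm N q c hq l ⟨m, hm⟩ h (by simp; omega), ← mul_assoc,
        ih (by omega) h, zero_mul]
    · have hlm : l = ⟨m, hm⟩ := Fin.ext (by simp; omega)
      rw [hlm, bb_aa_zero N q c ⟨m, hm⟩ (by simp; omega), mul_zero]

lemma aa_comm_BB (N : ℕ) (q c : ℂ) (hq : q ≠ 0) (l : Fin N) (m : ℕ)
    (hm : m ≤ l.val) (h2 : 2 * l.val + 1 < N) :
    aaE N q c l * BBE N q c m = BBE N q c m * aaE N q c l := by
  induction m with
  | zero => rw [BBE_zero, mul_one, one_mul]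
  | succ k ih =>
    have hk : k < N := by omega
    rw [BBE_succ N q c k hk, ← mul_assoc, ih (by omega), mul_assoc,
      aa_mul_bb_comm N q c hq ⟨k, hk⟩ l (by simpa using hm) (by simp; omega), mul_assoc]

lemma aa_mul_BB (N : ℕ) (q c : ℂ) (hq : q ≠ 0) (r : ℕ) (hr : 2 * r + 1 ≤ N)
    (l : Fin N) (hl : l.val < r) :
    aaE N q c l * BBE N q c r = 0 := by
  induction r with
  | zero => omega
  | succ m ih =>
    have hm : m < N := by omega
    rw [BBE_succ N q c m hm, ← mul_assoc]
    rcases Nat.lt_or_ge l.val m with h | h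
    · rw [ih (by omega) h, zero_mul]
    · have hlm : l = ⟨m, hm⟩ := Fin.ext (by simp; omega)
      rw [aa_comm_BB N q c hq l m (by omega) (by omega), mul_assoc, hlm,
        aa_bb_zero N q c ⟨m, hm⟩ (by simp; omega), mul_zero]

lemma gen_comm_BB (N : ℕ) (q c : ℂ) (hq : q ≠ 0) (u : Fin N) (m : ℕ)
    (hm : m ≤ u.val) (h2 : u.val + m < N) :
    γ N q c u * BBE N q c m = BBE N q c m * γ N q c u := by
  induction m with
  | zero => rw [BBE_zero, mul_one, one_mul]
  | succ k ih =>
    have hk : k < N := by omega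
    rw [BBE_succ N q c k hk, ← mul_assoc, ih (by omega) (by omega), mul_assoc,
      gen_comm_bb N q c hq ⟨k, hk⟩ u (by simp; omega) (by simp; omega), mul_assoc]

lemma gen_comm_Sig (N : ℕ) (q c : ℂ) (hq : q ≠ 0) (r : Fin N) (h : 2 * r.val + 1 ≤ N) :
    γ N q c r * Sig N q c r = Sig N q c r * γ N q c r := by
  unfold Sig
  rw [Finset.mul_sum, Finset.sum_mul]
  refine Finset.sum_congr rfl fun l hl => ?_
  have hl' : l.val < r.val := Fin.lt_def.mp (Finset.mem_Iio.mp hl)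
  rw [mul_smul_comm, smul_mul_assoc, gen_comm_aa N q c hq l r hl' (by omega)]

lemma BB_mul_Sig (N : ℕ) (q c : ℂ) (hq : q ≠ 0) (r : Fin N) (hr : 2 * r.val + 1 ≤ N) :
    BBE N q c r.val * Sig N q c r = 0 := by
  unfold Sig
  rw [Finset.mul_sum]
  refine Finset.sum_eq_zero fun l hl => ?_
  have hl' : l.val < r.val := Fin.lt_def.mp (Finset.mem_Iio.mp hl)
  rw [mul_smul_comm, BB_mul_aa N q c hq r.val hr l hl', smul_zero]

lemma Sig_mul_BB (N : ℕ) (q c : ℂ) (hq : q ≠ 0) (r : Fin N) (hr : 2 * r.val + 1 ≤ N) :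
    Sig N q c r * BBE N q c r.val = 0 := by
  unfold Sig
  rw [Finset.sum_mul]
  refine Finset.sum_eq_zero fun l hl => ?_
  have hl' : l.val < r.val := Fin.lt_def.mp (Finset.mem_Iio.mp hl)
  rw [smul_mul_assoc, aa_mul_BB N q c hq r.val hr l hl', smul_zero]

/-! ### The key identities -/

lemma aa_add_bb (N : ℕ) (q c : ℂ) (r : Fin N) (h : 2 * r.val + 1 < N) :
    aaE N q c r + bbE N q c r =
      (q ^ 2 - q⁻¹ ^ 2) • Sig N q c r + algebraMap ℂ _ (scE N q c r) := by
  show aaE N q c r + γ N q c (dual r) * γ N q c r = _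
  rw [cl_pair N q c r h]
  show aaE N q c r + (-(aaE N q c r) + _ + _) = _
  abel

lemma key1 (N : ℕ) (q c : ℂ) (hq : q ≠ 0) (r : Fin N) (h : 2 * r.val + 3 ≤ N) :
    γ N q c r * bbE N q c r * γ N q c (dual r) =
      (q ^ 2 - q⁻¹ ^ 2) • (Sig N q c r * aaE N q c r) + scE N q c r • aaE N q c r := by
  have hsq : γ N q c r * γ N q c r = 0 := cl_sq N q c r (by omega)
  have hcomm : γ N q c r * Sig N q c r = Sig N q c r * γ N q c r :=
    gen_comm_Sig N q c hq r (by omega)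
  have h0 : γ N q c r * aaE N q c r * γ N q c (dual r) = 0 := by
    show γ N q c r * (γ N q c r * γ N q c (dual r)) * γ N q c (dual r) = 0
    rw [← mul_assoc, hsq, zero_mul, zero_mul]
  have h2 : γ N q c r * ((q ^ 2 - q⁻¹ ^ 2) • Sig N q c r) * γ N q c (dual r) =
      (q ^ 2 - q⁻¹ ^ 2) • (Sig N q c r * aaE N q c r) := by
    rw [mul_smul_comm, smul_mul_assoc, hcomm, mul_assoc]
    rfl
  have h3 : γ N q c r * algebraMap ℂ (Cl N q c) (scE N q c r) * γ N q c (dual r) =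
      scE N q c r • aaE N q c r := by
    rw [← Algebra.commutes (scE N q c r) (γ N q c r), mul_assoc, ← Algebra.smul_def]
    rfl
  calc γ N q c r * bbE N q c r * γ N q c (dual r)
      = γ N q c r * aaE N q c r * γ N q c (dual r) +
          γ N q c r * bbE N q c r * γ N q c (dual r) := by rw [h0, zero_add]
    _ = γ N q c r * (aaE N q c r + bbE N q c r) * γ N q c (dual r) := by
        rw [mul_add, add_mul]
    _ = γ N q c r * ((q ^ 2 - q⁻¹ ^ 2) • Sig N q c r) * γ N q c (dual r) +
          γ N q c r * algebraMap ℂ (Cl N q c) (scE N q c r) * γ N q c (dual r) := by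
        rw [aa_add_bb N q c r (by omega), mul_add, add_mul]
    _ = (q ^ 2 - q⁻¹ ^ 2) • (Sig N q c r * aaE N q c r) + scE N q c r • aaE N q c r := by
        rw [h2, h3]

lemma ID1 (N : ℕ) (q c : ℂ) (hq : q ≠ 0) (r : Fin N) (h : 2 * r.val + 3 ≤ N) :
    γ N q c r * BBE N q c (r.val + 1) * γ N q c (dual r) =
      scE N q c r • (BBE N q c r.val * aaE N q c r) := by
  have hrN : r.val < N := r.2
  have heta : (⟨r.val, hrN⟩ : Fin N) = r := rfl
  rw [BBE_succ N q c r.val hrN, heta, ← mul_assoc,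
    gen_comm_BB N q c hq r r.val le_rfl (by omega), mul_assoc, mul_assoc,
    ← mul_assoc (γ N q c r), key1 N q c hq r h, mul_add, mul_smul_comm, mul_smul_comm,
    ← mul_assoc, BB_mul_Sig N q c hq r (by omega), zero_mul, smul_zero, zero_add]

lemma ID2 (N : ℕ) (q c : ℂ) (hq : q ≠ 0) (r : Fin N) (h : 2 * r.val + 3 ≤ N) :
    BBE N q c r.val * aaE N q c r + BBE N q c (r.val + 1) =
      scE N q c r • BBE N q c r.val := by
  have hrN : r.val < N := r.2
  have heta : (⟨r.val, hrN⟩ : Fin N) = r := rfl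
  rw [BBE_succ N q c r.val hrN, heta, ← mul_add, aa_add_bb N q c r (by omega), mul_add,
    mul_smul_comm, BB_mul_Sig N q c hq r (by omega), smul_zero, zero_add,
    ← Algebra.commutes (scE N q c r) (BBE N q c r.val), ← Algebra.smul_def]

lemma ID3 (N : ℕ) (q c : ℂ) (hq : q ≠ 0) (r : Fin N) (h : 2 * r.val + 1 < N) :
    (aaE N q c r + bbE N q c r) * BBE N q c r.val = scE N q c r • BBE N q c r.val := by
  rw [aa_add_bb N q c r h, add_mul, smul_mul_assoc, Sig_mul_BB N q c hq r (by omega),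
    smul_zero, zero_add, ← Algebra.smul_def]

lemma ID4 (N : ℕ) (q c : ℂ) (hq : q ≠ 0) (r : Fin N) (h : 2 * r.val + 1 = N) :
    (γ N q c r * γ N q c r) * BBE N q c r.val = (c ^ 2) • BBE N q c r.val := by
  rw [cl_mid N q c r h, add_mul, smul_mul_assoc, Sig_mul_BB N q c hq r (by omega),
    smul_zero, zero_add, ← Algebra.smul_def]


/-- if some `μ_j = 0` then the only `z` with `zγ_i = μ_i γ_i z` for all `i`
is `z = 0`. -/
theorem eq_zero_of_commutation_with_zero_factor (N : ℕ) (hN : 3 ≤ N) (q c : ℂ)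
    (hq : q ≠ 0) (hqr : ∀ m : ℕ, 0 < m → q ^ m ≠ 1) (hc : c ≠ 0)
    (μ : Fin N → ℂ) (j : Fin N) (hj : μ j = 0)
    (z : Cl N q c) (hz : ∀ i : Fin N, z * γ N q c i = μ i • (γ N q c i * z)) :
    z = 0 := by
  -- `q + q⁻¹ ≠ 0`
  have hq4 : q + q⁻¹ ≠ 0 := by
    intro h0
    have h1 : (q + q⁻¹) * q = 0 := by rw [h0, zero_mul]
    rw [add_mul, inv_mul_cancel₀ hq] at h1
    have h2 : q ^ 2 = -1 := by
      rw [sq]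
      linear_combination h1
    exact hqr 4 (by norm_num)
      (by rw [show (4 : ℕ) = 2 * 2 from rfl, pow_mul, h2]; norm_num)
  have hscne : ∀ r : Fin N, scE N q c r ≠ 0 := fun r =>
    mul_ne_zero (mul_ne_zero (pow_ne_zero 2 hc) (zpow_ne_zero _ hq)) hq4
  -- every element of `Cl` can be moved across `z`
  have hw : ∀ X : Cl N q c, ∃ w : Cl N q c, z * X = w * z := by
    intro X
    obtain ⟨F, rfl⟩ := RingQuot.mkAlgHom_surjective ℂ (Rel N q c) X
    induction F using FreeAlgebra.induction with
    | grade0 r =>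
        refine ⟨algebraMap ℂ _ r, ?_⟩
        rw [AlgHom.commutes]
        exact (Algebra.commutes r z).symm
    | grade1 i =>
        refine ⟨μ i • γ N q c i, ?_⟩
        have : RingQuot.mkAlgHom ℂ (Rel N q c) (FreeAlgebra.ι ℂ i) = γ N q c i := rfl
        rw [this, hz i, smul_mul_assoc]
    | mul F G ihF ihG =>
        obtain ⟨w1, h1⟩ := ihF
        obtain ⟨w2, h2⟩ := ihG
        exact ⟨w1 * w2, by rw [map_mul, ← mul_assoc, h1, mul_assoc, h2, ← mul_assoc]⟩
    | add F G ihF ihG =>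
        obtain ⟨w1, h1⟩ := ihF
        obtain ⟨w2, h2⟩ := ihG
        exact ⟨w1 + w2, by rw [map_add, mul_add, h1, h2, add_mul]⟩
  -- `z` kills everything ending with `γ j`
  have hJ0 : ∀ X : Cl N q c, z * (X * γ N q c j) = 0 := by
    intro X
    obtain ⟨w, hwX⟩ := hw X
    rw [← mul_assoc, hwX, mul_assoc, hz j, hj, zero_smul, mul_zero]
  -- closure properties of the annihilated set
  have Jleft : ∀ (w a : Cl N q c), (∀ X, z * (X * w) = 0) →
      ∀ X, z * (X * (a * w)) = 0 := by
    intro w a hw0 X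
    rw [← mul_assoc X a w]
    exact hw0 (X * a)
  have Jright : ∀ (w a : Cl N q c), (∀ X, z * (X * w) = 0) →
      ∀ X, z * (X * (w * a)) = 0 := by
    intro w a hw0 X
    rw [← mul_assoc X w a, ← mul_assoc z (X * w) a, hw0 X, zero_mul]
  have Jadd : ∀ (w w' : Cl N q c), (∀ X, z * (X * w) = 0) → (∀ X, z * (X * w') = 0) →
      ∀ X, z * (X * (w + w')) = 0 := by
    intro w w' h1 h2 X
    rw [mul_add, mul_add, h1 X, h2 X, add_zero]
  have Jsmul : ∀ (w : Cl N q c) (s : ℂ), s ≠ 0 → (∀ X, z * (X * (s • w)) = 0) →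
      ∀ X, z * (X * w) = 0 := by
    intro w s hs h X
    have h' := h X
    rw [mul_smul_comm, mul_smul_comm] at h'
    exact (smul_eq_zero.mp h').resolve_left hs
  -- the row index of j
  have hjN : j.val < N := j.2
  have hi0 : 2 * min j.val (N - 1 - j.val) + 1 ≤ N := by omega
  have hi0N : min j.val (N - 1 - j.val) < N := by omega
  set i0 : ℕ := min j.val (N - 1 - j.val) with hi0def
  -- `BBE i0` is annihilated
  have hB_i0 : ∀ X, z * (X * BBE N q c i0) = 0 := by
    rcases Nat.lt_or_ge (2 * i0 + 1) N with hlt | hge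
    · -- non-middle row
      have haabb : (∀ X, z * (X * aaE N q c ⟨i0, hi0N⟩) = 0) ∧
          (∀ X, z * (X * bbE N q c ⟨i0, hi0N⟩) = 0) := by
        have hjj : j.val = i0 ∨ j.val = N - 1 - i0 := by omega
        rcases hjj with h1 | h1
        · have hjF : j = (⟨i0, hi0N⟩ : Fin N) := Fin.ext h1
          rw [hjF] at hJ0
          exact ⟨Jright _ _ hJ0, Jleft _ _ hJ0⟩
        · have hjF : dual (⟨i0, hi0N⟩ : Fin N) = j := Fin.ext (by
            show N - 1 - i0 = j.val; omega)
          rw [← hjF] at hJ0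
          exact ⟨Jleft _ _ hJ0, Jright _ _ hJ0⟩
      have hsum := Jright _ (BBE N q c i0) (Jadd _ _ haabb.1 haabb.2)
      rw [ID3 N q c hq ⟨i0, hi0N⟩ hlt] at hsum
      exact Jsmul _ _ (hscne _) hsum
    · -- middle row
      have hmid : 2 * i0 + 1 = N := by omega
      have hjF : j = (⟨i0, hi0N⟩ : Fin N) := Fin.ext (by show j.val = i0; omega)
      rw [hjF] at hJ0
      have hgg := Jright _ (BBE N q c i0) (Jright _ (γ N q c ⟨i0, hi0N⟩) hJ0)
      have e : ∀ X, z * (X * (γ N q c ⟨i0, hi0N⟩ * γ N q c ⟨i0, hi0N⟩ * BBE N q c i0)) = 0 := hgg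
      rw [ID4 N q c hq ⟨i0, hi0N⟩ hmid] at e
      exact Jsmul _ _ (pow_ne_zero 2 hc) e
  -- descent
  have hdesc : ∀ d : ℕ, d ≤ i0 → ∀ X, z * (X * BBE N q c (i0 - d)) = 0 := by
    intro d
    induction d with
    | zero => intro _; simpa using hB_i0
    | succ e ih =>
      intro hd
      have hIH := ih (by omega)
      have hre : i0 - e = (i0 - (e + 1)) + 1 := by omega
      rw [hre] at hIH
      set r : ℕ := i0 - (e + 1) with hrdef
      have hrN : r < N := by omega
      have h3 : 2 * r + 3 ≤ N := by omega
      have t1 := Jright _ (γ N q c (dual ⟨r, hrN⟩)) (Jleft _ (γ N q c ⟨r, hrN⟩) hIH)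
      rw [ID1 N q c hq ⟨r, hrN⟩ h3] at t1
      have t2 := Jsmul _ _ (hscne _) t1
      have t3 := Jadd _ _ t2 hIH
      rw [ID2 N q c hq ⟨r, hrN⟩ h3] at t3
      exact Jsmul _ _ (hscne _) t3
  have hone := hdesc i0 le_rfl
  rw [Nat.sub_self] at hone
  have := hone 1
  rw [BBE_zero, mul_one, mul_one] at this
  exact this

end FRT
end
end
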